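/- Let p be an odd prime with p ≡ 1 (mod 3). Then the minimal faithful permutation degree of G(p,p,3) ≅ (C_p × C_p) ⋊ Sym(3) equals 2p. -/

import Mathlib

open Equiv Multiplicative Polynomial

/-- Minimal faithful permutation degree. -/
noncomputable def minDeg (G : Type*) [Group G] : ℕ :=
  sInf {n | ∃ f : G →* Equiv.Perm (Fin n), Function.Injective f}

/-- Coordinate-permutation automorphism of the base group. -/
def permAut (p q : ℕ) (σ : Equiv.Perm (Fin q)) :
    MulAut (Fin q → Multiplicative (ZMod p)) where
  toFun v := v ∘ σ.symm
  invFun v := v ∘ σ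
  left_inv v := by funext i; simp
  right_inv v := by funext i; simp
  map_mul' v w := rfl

/-- The action of `Sym(q)` on the base group of the wreath product. -/
def wreathAct (p q : ℕ) :
    Equiv.Perm (Fin q) →* MulAut (Fin q → Multiplicative (ZMod p)) where
  toFun := permAut p q
  map_one' := rfl
  map_mul' σ τ := rfl

/-- The wreath product `C_p ≀ Sym(q)`. -/
abbrev Wreath (p q : ℕ) :=
  (Fin q → Multiplicative (ZMod p)) ⋊[wreathAct p q] Equiv.Perm (Fin q)

/-- The complex reflection group `G(p,p,q)` as a subgroup of `C_p ≀ Sym(q)`. -/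
def Gppq (p q : ℕ) : Subgroup (Wreath p q) where
  carrier := {g | ∑ i, Multiplicative.toAdd (g.left i) = 0}
  one_mem' := by simp
  mul_mem' := by
    intro a b ha hb
    simp only [Set.mem_setOf_eq, SemidirectProduct.mul_left] at *
    have : ∑ i, toAdd ((wreathAct p q a.right b.left) i) = 0 := by
      have := Equiv.sum_comp a.right.symm (fun i => toAdd (b.left i))
      exact this.trans hb
    simp [Pi.mul_apply, toAdd_mul, Finset.sum_add_distrib, ha, this]
  inv_mem' := by
    intro a ha
    simp only [Set.mem_setOf_eq, SemidirectProduct.inv_left] at *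
    have h := Equiv.sum_comp a.right (fun i => toAdd (a.left⁻¹ i))
    have h2 : ∑ i, toAdd (a.left⁻¹ i) = 0 := by
      simp [toAdd_inv, Finset.sum_neg_distrib, ha]
    simp only [wreathAct, permAut, map_inv]
    exact h.trans h2

/-!
`G(p,p,3)` has order `6p²`, so a faithful action on `n` points forces `p² ∣ n!`, i.e. `2p ≤ n`.

Conversely, as `p ≡ 1 (mod 3)` there is a primitive cube root of unity `ω` in `ZMod p`. The
`ω`-eigenline `L` of the rotation `(0 1 2)` on the base group is normalised by `A₃`, and `L ⋊ A₃`
has order `3p`, hence index `2p` in `G(p,p,3)`. Its normal core `N` is trivial: since `ω² ≠ 1`,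
`L` contains no nonzero vector whose image under a transposition stays in `L`, so every element of
`N` has trivial base part; conjugating `g ∈ N` by the base element `(1, ω, ω²)`, whose coordinates
are distinct, then shows that the permutation part of `g` fixes every coordinate. So the action on
the cosets of `L ⋊ A₃` is faithful of degree `2p`.
-/

section minDeg

variable {G : Type*} [Group G]

lemma minDeg_le_of_injective {n : ℕ} (f : G →* Perm (Fin n)) (hf : Function.Injective f) :
    minDeg G ≤ n :=
  Nat.sInf_le ⟨f, hf⟩

lemma minDeg_le_index (H : Subgroup G) [H.FiniteIndex] (hH : H.normalCore = ⊥) :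
    minDeg G ≤ H.index := by
  let e : G ⧸ H ≃ Fin H.index := (Finite.equivFin _).trans (finCongr H.index_eq_card.symm)
  have hfaithful : Function.Injective (MulAction.toPermHom G (G ⧸ H)) := by
    rw [← MonoidHom.ker_eq_bot_iff, ← Subgroup.normalCore_eq_ker, hH]
  exact minDeg_le_of_injective ((permCongrHom e).toMonoidHom.comp _)
    ((permCongrHom e).injective.comp hfaithful)

lemma exists_injective_perm_minDeg [Finite G] :
    ∃ f : G →* Perm (Fin (minDeg G)), Function.Injective f := by
  have hcayley : Nat.card G ∈ {n | ∃ f : G →* Perm (Fin n), Function.Injective f} :=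
    ⟨(permCongrHom (Finite.equivFin G)).toMonoidHom.comp (MulAction.toPermHom G G),
      (permCongrHom _).injective.comp MulAction.toPerm_injective⟩
  exact Nat.sInf_mem ⟨_, hcayley⟩

lemma card_dvd_factorial_minDeg [Finite G] : Nat.card G ∣ (minDeg G).factorial := by
  obtain ⟨f, hf⟩ := exists_injective_perm_minDeg (G := G)
  simpa [Nat.card_eq_fintype_card, Fintype.card_perm] using Subgroup.card_dvd_of_injective f hf

end minDeg

lemma Nat.Prime.mul_le_of_pow_dvd_factorial {p k n : ℕ} (hp : p.Prime) (hkp : k ≤ p)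
    (h : p ^ k ∣ n.factorial) : k * p ≤ n := by
  by_contra! hn
  have hlog : Nat.log p n < 2 := by
    rcases eq_or_ne n 0 with rfl | hn0
    · simp
    · exact Nat.log_lt_of_lt_pow hn0 (by nlinarith)
  rw [hp.pow_dvd_factorial_iff hlog, Finset.sum_Ico_succ_top le_rfl, Finset.Ico_self,
    Finset.sum_empty, zero_add, pow_one, Nat.le_div_iff_mul_le hp.pos] at h
  omega

lemma mul_le_minDeg_of_pow_dvd_card {G : Type*} [Group G] [Finite G] {p k : ℕ} (hp : p.Prime)
    (hkp : k ≤ p) (h : p ^ k ∣ Nat.card G) : k * p ≤ minDeg G :=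
  hp.mul_le_of_pow_dvd_factorial hkp (h.trans card_dvd_factorial_minDeg)

section eigen

variable {p q : ℕ}

lemma wreathAct_apply (σ : Perm (Fin q)) (v : Fin q → Multiplicative (ZMod p)) (i : Fin q) :
    wreathAct p q σ v i = v (σ⁻¹ i) := rfl

/-- The `ω`-eigenspace of `c = finRotate q` acting on the base group, written additively:
`v i = ω * v (c i)` for all `i` says `c • v = ω v`, since `(c • v) (c i) = v i`. -/
def rotEigenspace (p q : ℕ) (ω : ZMod p) : Subgroup (Fin q → Multiplicative (ZMod p)) where
  carrier := {v | ∀ i, toAdd (v i) = ω * toAdd (v (finRotate q i))}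
  one_mem' _ := by simp
  mul_mem' {v w} hv hw i := by simp only [Pi.mul_apply, toAdd_mul, hv i, hw i]; ring
  inv_mem' {v} hv i := by simp only [Pi.inv_apply, toAdd_inv, hv i]; ring

lemma wreathAct_mem_rotEigenspace {ω : ZMod p} {σ : Perm (Fin q)} (hσ : Commute σ (finRotate q))
    {v : Fin q → Multiplicative (ZMod p)} (hv : v ∈ rotEigenspace p q ω) :
    wreathAct p q σ v ∈ rotEigenspace p q ω := fun i => by
  rw [wreathAct_apply, wreathAct_apply, ← Perm.mul_apply, hσ.inv_left.eq]
  exact hv _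

/-- `L ⋊ C`, with `L = rotEigenspace p q ω` and `C` the centraliser of the rotation in `Sym(q)`
(that is, `A₃` when `q = 3`). -/
def eigenSubgroup (p q : ℕ) (ω : ZMod p) : Subgroup (Wreath p q) where
  carrier := {g | Commute g.right (finRotate q) ∧ g.left ∈ rotEigenspace p q ω}
  one_mem' := ⟨Commute.one_left _, Subgroup.one_mem _⟩
  mul_mem' ha hb := ⟨ha.1.mul_left hb.1,
    Subgroup.mul_mem _ ha.2 (wreathAct_mem_rotEigenspace ha.1 hb.2)⟩
  inv_mem' ha := ⟨ha.1.inv_left,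
    wreathAct_mem_rotEigenspace ha.1.inv_left (Subgroup.inv_mem _ ha.2)⟩

end eigen

namespace SemidirectProduct

variable {N H : Type*} [Group N] [Group H] {φ : H →* MulAut N}

lemma left_conj_inr (h : H) (x : N ⋊[φ] H) : (inr h * x * (inr h)⁻¹).left = φ h x.left := by
  simp [mul_left, inv_left]

lemma left_conj_inl (n : N) (x : N ⋊[φ] H) :
    (inl n * x * (inl n)⁻¹).left = n * x.left * φ x.right n⁻¹ := by
  simp [mul_left, inv_left]

end SemidirectProduct

open SemidirectProduct

lemma IsPrimitiveRoot.sq_add_self_add_one {R : Type*} [CommRing R] [IsDomain R] {ζ : R}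
    (hζ : IsPrimitiveRoot ζ 3) : ζ ^ 2 + ζ + 1 = 0 := by
  have h := hζ.geom_sum_eq_zero (by norm_num)
  simp only [Finset.sum_range_succ, Finset.sum_range_zero] at h
  linear_combination h

section cubeRoot

variable {p : ℕ} {ω : ZMod p}

lemma mem_rotEigenspace_three {v : Fin 3 → Multiplicative (ZMod p)} :
    v ∈ rotEigenspace p 3 ω ↔ toAdd (v 0) = ω * toAdd (v 1) ∧ toAdd (v 1) = ω * toAdd (v 2) ∧
      toAdd (v 2) = ω * toAdd (v 0) := by
  simp [rotEigenspace, Fin.forall_fin_succ]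

lemma card_Gppq_three : Nat.card (Gppq p 3) = 6 * p ^ 2 := by
  let e : Gppq p 3 ≃ ZMod p × ZMod p × Perm (Fin 3) :=
    { toFun g := (toAdd (g.1.left 0), toAdd (g.1.left 1), g.1.right)
      invFun x := ⟨⟨![ofAdd x.1, ofAdd x.2.1, ofAdd (-x.1 - x.2.1)], x.2.2⟩, by
        show ∑ i, _ = 0
        simp [Fin.sum_univ_three]⟩
      left_inv g := by
        have hg : ∑ i, toAdd (g.1.left i) = 0 := g.2
        rw [Fin.sum_univ_three] at hg
        refine Subtype.ext (SemidirectProduct.ext (funext fun i => ?_) rfl)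
        fin_cases i
        · rfl
        · rfl
        · exact toAdd.injective (by simp; linear_combination -hg)
      right_inv x := by simp }
  rw [Nat.card_congr e, Nat.card_prod, Nat.card_prod, Nat.card_zmod, Nat.card_perm,
    Nat.card_fin]
  ring

lemma card_rotEigenspace_three (hω : ω ^ 3 = 1) : Nat.card (rotEigenspace p 3 ω) = p := by
  let e : rotEigenspace p 3 ω ≃ ZMod p :=
    { toFun v := toAdd (v.1 2)
      invFun x := ⟨![ofAdd (ω ^ 2 * x), ofAdd (ω * x), ofAdd x],
        mem_rotEigenspace_three.mpr ⟨by simp; ring, by simp, by simp; linear_combination -x * hω⟩⟩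
      left_inv v := by
        obtain ⟨h0, h1, -⟩ := mem_rotEigenspace_three.mp v.2
        refine Subtype.ext (funext fun i => toAdd.injective ?_)
        fin_cases i
        · simp [h0, h1]; ring
        · simp [h1]
        · rfl
      right_inv x := by simp }
  rw [Nat.card_congr e, Nat.card_zmod]

lemma card_eigenSubgroup_three (hω : ω ^ 3 = 1) : Nat.card (eigenSubgroup p 3 ω) = 3 * p := by
  let e : eigenSubgroup p 3 ω ≃
      rotEigenspace p 3 ω × {σ : Perm (Fin 3) // σ * finRotate 3 = finRotate 3 * σ} :=
    { toFun g := (⟨g.1.left, g.2.2⟩, ⟨g.1.right, g.2.1⟩)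
      invFun x := ⟨⟨x.1, x.2⟩, x.2.2, x.1.2⟩
      left_inv _ := rfl
      right_inv _ := rfl }
  have hcentralizer : Nat.card {σ : Perm (Fin 3) // σ * finRotate 3 = finRotate 3 * σ} = 3 := by
    rw [Nat.card_eq_fintype_card]; decide
  rw [Nat.card_congr e, Nat.card_prod, card_rotEigenspace_three hω, hcentralizer, mul_comm]

variable [Fact p.Prime]

lemma eigenSubgroup_le_Gppq (hω : IsPrimitiveRoot ω 3) : eigenSubgroup p 3 ω ≤ Gppq p 3 := by
  rintro g ⟨-, hg⟩
  obtain ⟨h0, h1, -⟩ := mem_rotEigenspace_three.mp hg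
  show ∑ i, toAdd (g.left i) = 0
  rw [Fin.sum_univ_three]
  linear_combination h0 + (1 + ω) * h1 + toAdd (g.left 2) * hω.sq_add_self_add_one

lemma eq_one_of_mem_rotEigenspace_of_swap (hω : IsPrimitiveRoot ω 3)
    {v : Fin 3 → Multiplicative (ZMod p)} (hv : v ∈ rotEigenspace p 3 ω)
    (hsv : wreathAct p 3 (swap 0 1) v ∈ rotEigenspace p 3 ω) : v = 1 := by
  obtain ⟨h0, -, h2⟩ := mem_rotEigenspace_three.mp hv
  obtain ⟨h0', -, -⟩ := mem_rotEigenspace_three.mp hsv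
  simp only [wreathAct_apply, swap_inv, swap_apply_left, swap_apply_right] at h0'
  have hv0 : toAdd (v 0) = 0 := by
    have : (1 - ω ^ 2) * toAdd (v 0) = 0 := by linear_combination h0 + ω * h0'
    exact (mul_eq_zero.mp this).resolve_left
      (sub_ne_zero.mpr (hω.pow_ne_one_of_pos_of_lt two_ne_zero (by norm_num)).symm)
  funext i
  fin_cases i
  · exact hv0
  · simpa [hv0] using h0'
  · simpa [hv0] using h2

lemma normalCore_eigenSubgroupOf_eq_bot (hω : IsPrimitiveRoot ω 3) :
    ((eigenSubgroup p 3 ω).subgroupOf (Gppq p 3)).normalCore = ⊥ := by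
  set N := ((eigenSubgroup p 3 ω).subgroupOf (Gppq p 3)).normalCore
  have hswap : inr (swap 0 1) ∈ Gppq p 3 := by simp [Gppq]
  have hleft : ∀ h ∈ N, (h : Wreath p 3).left = 1 := by
    intro h hh
    refine eq_one_of_mem_rotEigenspace_of_swap hω (Subgroup.normalCore_le _ hh).2 ?_
    rw [← left_conj_inr]
    exact (hh ⟨_, hswap⟩).2
  let u : Fin 3 → Multiplicative (ZMod p) := fun i => ofAdd (ω ^ (i : ℕ))
  have hu : inl u ∈ Gppq p 3 := by
    show ∑ i, toAdd (u i) = 0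
    simp only [u, Fin.sum_univ_three, toAdd_ofAdd, Fin.val_zero, Fin.val_one, Fin.val_two]
    linear_combination hω.sq_add_self_add_one
  have hu_inj : Function.Injective u := fun i j hij =>
    Fin.ext (hω.pow_inj i.isLt j.isLt (ofAdd.injective hij))
  rw [eq_bot_iff]
  intro g hg
  have hg1 := hleft g hg
  have hconj := hleft _ ((Subgroup.normalCore_normal _).conj_mem g hg ⟨_, hu⟩)
  rw [Subgroup.coe_mul, Subgroup.coe_mul, Subgroup.coe_inv, left_conj_inl, hg1, mul_one,
    map_inv, mul_inv_eq_one] at hconj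
  have hσ : (g : Wreath p 3).right = 1 := Equiv.ext fun i => hu_inj <| by
    simpa [wreathAct_apply] using congrFun hconj ((g : Wreath p 3).right i)
  exact Subtype.ext (SemidirectProduct.ext hg1 hσ)

lemma index_eigenSubgroupOf_Gppq (hω : IsPrimitiveRoot ω 3) :
    ((eigenSubgroup p 3 ω).subgroupOf (Gppq p 3)).index = 2 * p := by
  have h := ((eigenSubgroup p 3 ω).subgroupOf (Gppq p 3)).card_mul_index
  rw [Nat.card_congr (Subgroup.subgroupOfEquivOfLe (eigenSubgroup_le_Gppq hω)).toEquiv,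
    card_eigenSubgroup_three hω.pow_eq_one, card_Gppq_three] at h
  have hp : 0 < p := (Fact.out : p.Prime).pos
  nlinarith

end cubeRoot

lemma ZMod.exists_isPrimitiveRoot_three {p : ℕ} [Fact p.Prime] (hmod : p % 3 = 1) :
    ∃ ω : ZMod p, IsPrimitiveRoot ω 3 := by
  obtain ⟨g, hg⟩ := exists_prime_orderOf_dvd_card (G := (ZMod p)ˣ) 3
    (by rw [ZMod.card_units]; omega)
  exact ⟨g, IsPrimitiveRoot.coe_units_iff.mpr (hg ▸ IsPrimitiveRoot.orderOf g)⟩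

theorem stmt9_general (p : ℕ) (hp : p.Prime) (hmod : p % 3 = 1) :
    minDeg (Gppq p 3) = 2 * p := by
  have := Fact.mk hp
  obtain ⟨ω, hω⟩ := ZMod.exists_isPrimitiveRoot_three hmod
  have hindex := index_eigenSubgroupOf_Gppq hω
  have : ((eigenSubgroup p 3 ω).subgroupOf (Gppq p 3)).FiniteIndex :=
    ⟨by simp [hindex, hp.ne_zero]⟩
  have : Finite (Gppq p 3) := Nat.finite_of_card_ne_zero (by simp [card_Gppq_three, hp.ne_zero])
  refine le_antisymm ?_ ?_
  · exact hindex ▸ minDeg_le_index _ (normalCore_eigenSubgroupOf_eq_bot hω)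
  · exact mul_le_minDeg_of_pow_dvd_card hp hp.two_le (card_Gppq_three ▸ dvd_mul_left _ _)

theorem stmt9 (p : ℕ) (hp : p.Prime) (hop : Odd p) (hmod : p % 3 = 1) :
    minDeg (Gppq p 3) = 2 * p :=
  stmt9_general p hp hmod
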